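/- Two-row bead configurations (beads colored red or blue in a top row and bottom row) that admit a unique non-crossing matching are exactly those of the following forms, up to swapping the two rows and up to swapping the two colors: (i) top row = a block of red beads followed by a block of blue beads, bottom row = a block of blue beads followed by a block of red beads; or (ii) top row = a block of red beads, then a block of blue beads, then a block of red beads, and bottom row = a single block of blue beads; in all cases subject to the balance condition that (#red - #blue) in the top row equals (#red - #blue) in the bottom row. -/

import Mathlib

/-- A bead is colored red or blue. -/
inductive Color : Type
  | red
  | blue
  deriving DecidableEq

/-- A matching of a two-row bead configuration with top row `t` and bottom row `b`:
a fixed-point-free involution on all beads in which every pair consists either of two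
beads of different colors in the same row, or of two beads of the same color in
different rows. -/
structure TRMatching (t b : List Color) where
  pair : Fin t.length ⊕ Fin b.length → Fin t.length ⊕ Fin b.length
  invol : ∀ x, pair (pair x) = x
  ne : ∀ x, pair x ≠ x
  topColor : ∀ i j, pair (Sum.inl i) = Sum.inl j → t.get i ≠ t.get j
  botColor : ∀ i j, pair (Sum.inr i) = Sum.inr j → b.get i ≠ b.get j
  crossColor : ∀ i j, pair (Sum.inl i) = Sum.inr j → t.get i = b.get j

/-- Non-crossing condition for a two-row matching, with all arcs drawn in the strip
between the rows: two same-row arcs cross iff their endpoints interleave; a same-row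
arc crosses a cross arc iff the cross arc's endpoint in that row lies strictly between
the arc's endpoints; two cross arcs cross iff their endpoints appear in opposite
orders in the two rows. -/
def TRNonCrossing {t b : List Color} (m : TRMatching t b) : Prop :=
  (∀ i j k l : Fin t.length, m.pair (Sum.inl i) = Sum.inl k →
      m.pair (Sum.inl j) = Sum.inl l → ¬ (i < j ∧ j < k ∧ k < l)) ∧
  (∀ i j k l : Fin b.length, m.pair (Sum.inr i) = Sum.inr k →
      m.pair (Sum.inr j) = Sum.inr l → ¬ (i < j ∧ j < k ∧ k < l)) ∧
  (∀ (a c i : Fin t.length) (j : Fin b.length), m.pair (Sum.inl a) = Sum.inl c →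
      m.pair (Sum.inl i) = Sum.inr j → ¬ (a < i ∧ i < c)) ∧
  (∀ (a c : Fin b.length) (i : Fin t.length) (j : Fin b.length),
      m.pair (Sum.inr a) = Sum.inr c →
      m.pair (Sum.inl i) = Sum.inr j → ¬ (a < j ∧ j < c)) ∧
  (∀ (i i' : Fin t.length) (j j' : Fin b.length), m.pair (Sum.inl i) = Sum.inr j →
      m.pair (Sum.inl i') = Sum.inr j' → i < i' → ¬ j' < j)

/-- Swap the two colors. -/
def swapColor : Color → Color
  | Color.red => Color.blue
  | Color.blue => Color.red

/-- The two basic forms of a two-row configuration `(t, b)` with a unique non-crossing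
matching: (i) top is a red block then a blue block while bottom is a blue block then a
red block; (ii) top is a red block, a blue block, then a red block, while bottom is a
single blue block. -/
def GoodPair (t b : List Color) : Prop :=
  (∃ p q r s : ℕ,
      t = List.replicate p Color.red ++ List.replicate q Color.blue ∧
      b = List.replicate r Color.blue ++ List.replicate s Color.red) ∨
  (∃ p q r s : ℕ,
      t = List.replicate p Color.red ++ List.replicate q Color.blue ++
            List.replicate r Color.red ∧
      b = List.replicate s Color.blue)

/-!
Reading the top row from left to right and then the bottom row from right to left, with the
colors of the bottom row swapped, turns a configuration into a word `w` in two letters, and its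
non-crossing matchings into the non-crossing perfect matchings of `w` that pair different
letters. Every such matching has a chord between two adjacent letters, and erasing such a pair
of letters, or inserting one, carries matchings to matchings; by induction, `w` has a matching
iff it is balanced. In a word `cᵃ c'ᵇ cᵈ` the two letters at the first block boundary are forced
to be matched to each other, so the matching is unique. Any other word contains a subsequence
`c c' c c'`, and then it has two matchings: directly if three consecutive letters alternate, and
otherwise after erasing a suitable adjacent pair between the two middle letters. Finally, the
words `cᵃ c'ᵇ cᵈ` are exactly the words of the configurations (i) and (ii) and of their images
under swapping the rows (which reverses the word and swaps its letters) and swapping the colors.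
-/

namespace Beads

@[simp]
theorem swapColor_swapColor (c : Color) : swapColor (swapColor c) = c := by
  cases c <;> rfl

theorem swapColor_involutive : Function.Involutive swapColor := swapColor_swapColor

theorem swapColor_ne (c : Color) : swapColor c ≠ c := by
  cases c <;> decide

theorem eq_swapColor_of_ne {c d : Color} (h : c ≠ d) : d = swapColor c := by
  cases c <;> cases d <;> first | rfl | exact absurd rfl h

theorem count_map_swapColor (c : Color) (l : List Color) :
    (l.map swapColor).count c = l.count (swapColor c) := by
  simpa using List.count_map_of_injective l swapColor swapColor_involutive.injective (swapColor c)

/-! ### Non-crossing matchings of a word -/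

-- A perfect matching of the positions of `w` pairing different letters, encoded as an
-- involution of `ℕ` fixing every index outside `w` so that positions can be shifted freely.
@[ext]
structure NCMatching (w : List Color) where
  f : ℕ → ℕ
  f_f : ∀ k, f (f k) = k
  f_of_length_le : ∀ k, w.length ≤ k → f k = k
  getElem?_f : ∀ k, w[f k]? = w[k]?.map swapColor
  noncrossing : ∀ ⦃i j⦄, i < j → j < f i → ¬ f i < f j

namespace NCMatching

variable {w : List Color} (m : NCMatching w)

theorem f_injective : Function.Injective m.f :=
  Function.LeftInverse.injective m.f_f

theorem f_lt_length {k : ℕ} (hk : k < w.length) : m.f k < w.length := by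
  have h := m.getElem?_f k
  rw [List.getElem?_eq_getElem hk, Option.map_some] at h
  exact (List.getElem?_eq_some_iff.mp h).1

theorem f_ne {k : ℕ} (hk : k < w.length) : m.f k ≠ k := by
  intro h
  have h' := m.getElem?_f k
  rw [h, List.getElem?_eq_getElem hk, Option.map_some, Option.some_inj] at h'
  exact swapColor_ne _ h'.symm

end NCMatching

/-! ### Erasing two adjacent letters -/

def shiftUp (i k : ℕ) : ℕ := if k < i then k else k + 2

def shiftDown (i k : ℕ) : ℕ := if k < i then k else k - 2

theorem shiftUp_strictMono (i : ℕ) : StrictMono (shiftUp i) := by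
  intro x y h
  simp only [shiftUp]
  split_ifs <;> omega

theorem shiftUp_ne_left (i k : ℕ) : shiftUp i k ≠ i := by
  simp only [shiftUp]
  split_ifs <;> omega

theorem shiftUp_ne_right (i k : ℕ) : shiftUp i k ≠ i + 1 := by
  simp only [shiftUp]
  split_ifs <;> omega

@[simp]
theorem shiftDown_shiftUp (i k : ℕ) : shiftDown i (shiftUp i k) = k := by
  simp only [shiftUp, shiftDown]
  split_ifs <;> omega

theorem shiftUp_shiftDown {i k : ℕ} (h₁ : k ≠ i) (h₂ : k ≠ i + 1) :
    shiftUp i (shiftDown i k) = k := by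
  simp only [shiftUp, shiftDown]
  split_ifs <;> omega

theorem eq_or_eq_or_shiftUp_eq (i k : ℕ) : i = k ∨ i + 1 = k ∨ ∃ k', shiftUp i k' = k := by
  by_cases h₁ : k = i
  · exact .inl h₁.symm
  by_cases h₂ : k = i + 1
  · exact .inr (.inl h₂.symm)
  exact .inr (.inr ⟨shiftDown i k, shiftUp_shiftDown h₁ h₂⟩)

def eraseAdj (w : List Color) (i : ℕ) : List Color := w.take i ++ w.drop (i + 2)

theorem getElem?_eraseAdj (w : List Color) (i k : ℕ) :
    (eraseAdj w i)[k]? = w[shiftUp i k]? := by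
  rcases le_or_gt i w.length with hi | hi
  · simp only [eraseAdj, shiftUp, List.getElem?_append, List.getElem?_take, List.getElem?_drop,
      List.length_take, min_eq_left hi]
    split_ifs <;> first | omega | rfl | (congr 1; omega)
  · rw [eraseAdj, List.take_of_length_le hi.le, List.drop_of_length_le (by omega),
      List.append_nil, shiftUp]
    split_ifs
    · rfl
    · rw [List.getElem?_eq_none, List.getElem?_eq_none] <;> omega

theorem length_eraseAdj {w : List Color} {i : ℕ} (h : i + 1 < w.length) :
    (eraseAdj w i).length + 2 = w.length := by
  simp only [eraseAdj, List.length_append, List.length_take, List.length_drop]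
  omega

namespace NCMatching

variable {w : List Color}

def insertChordFun (i : ℕ) (g : ℕ → ℕ) (k : ℕ) : ℕ :=
  if k = i then i + 1 else if k = i + 1 then i else shiftUp i (g (shiftDown i k))

@[simp]
theorem insertChordFun_left (i : ℕ) (g : ℕ → ℕ) : insertChordFun i g i = i + 1 := by
  simp [insertChordFun]

@[simp]
theorem insertChordFun_right (i : ℕ) (g : ℕ → ℕ) : insertChordFun i g (i + 1) = i := by
  simp [insertChordFun]

@[simp]
theorem insertChordFun_shiftUp (i : ℕ) (g : ℕ → ℕ) (k : ℕ) :
    insertChordFun i g (shiftUp i k) = shiftUp i (g k) := by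
  simp [insertChordFun, shiftUp_ne_left, shiftUp_ne_right]

def insertChord {i : ℕ} (hi : i + 1 < w.length) (hne : w[i + 1]? = w[i]?.map swapColor)
    (m : NCMatching (eraseAdj w i)) : NCMatching w where
  f := insertChordFun i m.f
  f_f k := by
    rcases eq_or_eq_or_shiftUp_eq i k with rfl | rfl | ⟨k, rfl⟩ <;> simp [m.f_f]
  f_of_length_le k hk := by
    have hlen := length_eraseAdj hi
    rcases eq_or_eq_or_shiftUp_eq i k with rfl | rfl | ⟨k, rfl⟩
    · omega
    · omega
    have hk' : (eraseAdj w i).length ≤ k := by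
      simp only [shiftUp] at hk; split_ifs at hk <;> omega
    rw [insertChordFun_shiftUp, m.f_of_length_le k hk']
  getElem?_f k := by
    rcases eq_or_eq_or_shiftUp_eq i k with rfl | rfl | ⟨k, rfl⟩
    · simpa using hne
    · simp [hne, Option.map_map, swapColor_involutive.comp_self]
    · rw [insertChordFun_shiftUp, ← getElem?_eraseAdj, ← getElem?_eraseAdj, m.getElem?_f]
  noncrossing a b hab hb hba := by
    have := shiftUp_strictMono i
    rcases eq_or_eq_or_shiftUp_eq i a with rfl | rfl | ⟨a, rfl⟩ <;>
    rcases eq_or_eq_or_shiftUp_eq i b with rfl | rfl | ⟨b, rfl⟩ <;>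
    simp only [insertChordFun_left, insertChordFun_right, insertChordFun_shiftUp,
      this.lt_iff_lt] at hab hb hba <;>
    first
    | omega
    | exact m.noncrossing hab hb hba

@[simp]
theorem insertChord_f_left {i : ℕ} (hi : i + 1 < w.length)
    (hne : w[i + 1]? = w[i]?.map swapColor) (m : NCMatching (eraseAdj w i)) :
    (insertChord hi hne m).f i = i + 1 :=
  insertChordFun_left i m.f

@[simp]
theorem insertChord_f_right {i : ℕ} (hi : i + 1 < w.length)
    (hne : w[i + 1]? = w[i]?.map swapColor) (m : NCMatching (eraseAdj w i)) :
    (insertChord hi hne m).f (i + 1) = i :=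
  insertChordFun_right i m.f

theorem insertChord_f_shiftUp {i : ℕ} (hi : i + 1 < w.length)
    (hne : w[i + 1]? = w[i]?.map swapColor) (m : NCMatching (eraseAdj w i)) (k : ℕ) :
    (insertChord hi hne m).f (shiftUp i k) = shiftUp i (m.f k) :=
  insertChordFun_shiftUp i m.f k

theorem insertChord_injective {i : ℕ} (hi : i + 1 < w.length)
    (hne : w[i + 1]? = w[i]?.map swapColor) : Function.Injective (insertChord hi hne) := by
  intro m m' h
  ext k
  have := congrArg (fun m'' : NCMatching w ↦ shiftDown i (m''.f (shiftUp i k))) h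
  simpa only [insertChord_f_shiftUp, shiftDown_shiftUp] using this

variable (m : NCMatching w) {i : ℕ} (hi : m.f i = i + 1)
include hi

theorem lt_length_of_f_eq_succ : i + 1 < w.length := by
  have hi' : i < w.length := by
    by_contra h
    have := m.f_of_length_le i (by omega)
    omega
  have := m.f_lt_length hi'
  omega

theorem f_shiftUp_ne_left (k : ℕ) : m.f (shiftUp i k) ≠ i := by
  have hi' : m.f (i + 1) = i := by rw [← hi, m.f_f]
  exact fun h ↦ shiftUp_ne_right i k (m.f_injective (h.trans hi'.symm))

theorem f_shiftUp_ne_right (k : ℕ) : m.f (shiftUp i k) ≠ i + 1 := by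
  rw [← hi]
  exact fun h ↦ shiftUp_ne_left i k (m.f_injective h)

theorem shiftUp_shiftDown_f_shiftUp (k : ℕ) :
    shiftUp i (shiftDown i (m.f (shiftUp i k))) = m.f (shiftUp i k) :=
  shiftUp_shiftDown (m.f_shiftUp_ne_left hi k) (m.f_shiftUp_ne_right hi k)

def eraseChord : NCMatching (eraseAdj w i) where
  f k := shiftDown i (m.f (shiftUp i k))
  f_f k := by
    rw [m.shiftUp_shiftDown_f_shiftUp hi, m.f_f, shiftDown_shiftUp]
  f_of_length_le k hk := by
    have hlt := m.lt_length_of_f_eq_succ hi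
    have hlen := length_eraseAdj hlt
    have hk' : shiftUp i k = k + 2 := by simp only [shiftUp]; split_ifs <;> omega
    rw [hk', m.f_of_length_le _ (by omega), ← hk', shiftDown_shiftUp]
  getElem?_f k := by
    rw [getElem?_eraseAdj, getElem?_eraseAdj, m.shiftUp_shiftDown_f_shiftUp hi, m.getElem?_f]
  noncrossing a b hab hb hba := by
    have hmono := shiftUp_strictMono i
    rw [← hmono.lt_iff_lt, m.shiftUp_shiftDown_f_shiftUp hi] at hb
    rw [← hmono.lt_iff_lt, m.shiftUp_shiftDown_f_shiftUp hi,
      m.shiftUp_shiftDown_f_shiftUp hi] at hba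
    exact m.noncrossing (hmono hab) hb hba

theorem insertChord_eraseChord (hne : w[i + 1]? = w[i]?.map swapColor) :
    insertChord (m.lt_length_of_f_eq_succ hi) hne (m.eraseChord hi) = m := by
  ext k
  rcases eq_or_eq_or_shiftUp_eq i k with rfl | rfl | ⟨k, rfl⟩
  · rw [insertChord_f_left, hi]
  · rw [insertChord_f_right, ← hi, m.f_f]
  · rw [insertChord_f_shiftUp]
    exact m.shiftUp_shiftDown_f_shiftUp hi k

end NCMatching

/-! ### Existence of matchings -/

def Balanced (w : List Color) : Prop := w.count .red = w.count .blue

theorem count_red_add_count_blue (w : List Color) :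
    w.count .red + w.count .blue = w.length := by
  induction w with
  | nil => rfl
  | cons a w ih => cases a <;> simp <;> omega

theorem count_eraseAdj {w : List Color} {i : ℕ} (hi : i + 1 < w.length)
    (hne : w[i + 1]? = w[i]?.map swapColor) (c : Color) :
    (eraseAdj w i).count c + 1 = w.count c := by
  rw [List.getElem?_eq_getElem hi, List.getElem?_eq_getElem (by omega), Option.map_some,
    Option.some_inj] at hne
  conv_rhs => rw [← List.take_append_drop i w, List.drop_eq_getElem_cons (by omega),
    List.drop_eq_getElem_cons hi, hne]
  rw [eraseAdj, List.count_append, List.count_append, show i + 1 + 1 = i + 2 from rfl]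
  cases w[i] <;> cases c <;> simp [swapColor] <;> omega

theorem balanced_eraseAdj_iff {w : List Color} {i : ℕ} (hi : i + 1 < w.length)
    (hne : w[i + 1]? = w[i]?.map swapColor) : Balanced (eraseAdj w i) ↔ Balanced w := by
  have hred := count_eraseAdj hi hne .red
  have hblue := count_eraseAdj hi hne .blue
  unfold Balanced
  omega

namespace NCMatching

variable {w : List Color} (m : NCMatching w)

theorem getElem?_succ_of_f_eq_succ {i : ℕ} (hi : m.f i = i + 1) :
    w[i + 1]? = w[i]?.map swapColor := by
  rw [← hi, m.getElem?_f]

-- The letter just inside the chord `(i, f i)` is matched by a shorter chord inside it.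
theorem exists_f_eq_succ_of_lt {i : ℕ} (hi : i < m.f i) : ∃ j, m.f j = j + 1 := by
  induction hd : m.f i - i using Nat.strong_induction_on generalizing i with
  | _ d ih =>
    by_cases hsucc : m.f i = i + 1
    · exact ⟨i, hsucc⟩
    have hlen : m.f i < w.length := by
      by_contra h
      have := m.f_of_length_le (m.f i) (by omega)
      rw [m.f_f] at this
      omega
    have hne : m.f (i + 1) ≠ i + 1 := m.f_ne (by omega)
    have hne' : m.f (i + 1) ≠ i := fun h ↦ by
      have := m.f_f (i + 1)
      rw [h] at this
      exact hsucc this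
    rcases lt_or_gt_of_ne hne with hlt | hgt
    · exfalso
      refine m.noncrossing (i := m.f (i + 1)) (j := i) (by omega) ?_ ?_ <;> rw [m.f_f] <;> omega
    · rcases lt_or_gt_of_ne (m.f_injective.ne (show i + 1 ≠ i by omega)) with h | h
      · exact ih _ (by omega) hgt rfl
      · exact (m.noncrossing (show i < i + 1 by omega) (by omega) h).elim

theorem exists_f_eq_succ (hw : w ≠ []) : ∃ i, m.f i = i + 1 := by
  have h0 : 0 < w.length := List.length_pos_iff.mpr hw
  exact m.exists_f_eq_succ_of_lt (i := 0) (Nat.pos_of_ne_zero (m.f_ne h0))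

end NCMatching

theorem NCMatching.balanced {w : List Color} (m : NCMatching w) : Balanced w := by
  induction hn : w.length using Nat.strong_induction_on generalizing w with
  | _ n ih =>
    rcases eq_or_ne w [] with rfl | hw
    · rfl
    obtain ⟨i, hi⟩ := m.exists_f_eq_succ hw
    have hlt := m.lt_length_of_f_eq_succ hi
    rw [← balanced_eraseAdj_iff hlt (m.getElem?_succ_of_f_eq_succ hi)]
    exact ih _ (by have := length_eraseAdj hlt; omega) (m.eraseChord hi) rfl

theorem exists_getElem?_succ_eq_swapColor :
    ∀ {w : List Color}, (∀ c, c ∈ w) →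
      ∃ i, i + 1 < w.length ∧ w[i + 1]? = w[i]?.map swapColor
  | [], h => absurd (h .red) List.not_mem_nil
  | [a], h => absurd (List.mem_singleton.mp (h (swapColor a))) (swapColor_ne a)
  | a :: b :: w, h => by
    by_cases hab : a = b
    · subst hab
      have h' : ∀ c, c ∈ a :: w := fun c ↦ by
        rcases List.mem_cons.mp (h c) with rfl | hc
        · exact List.mem_cons_self
        · exact hc
      obtain ⟨i, hi, hne⟩ := exists_getElem?_succ_eq_swapColor h'
      exact ⟨i + 1, by simpa using hi, by simpa using hne⟩
    · exact ⟨0, by simp, by simp [eq_swapColor_of_ne hab]⟩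

def NCMatching.nil : NCMatching [] where
  f := id
  f_f _ := rfl
  f_of_length_le _ _ := rfl
  getElem?_f _ := rfl
  noncrossing _ _ h₁ h₂ := absurd (h₁.trans h₂) (lt_irrefl _)

theorem Balanced.nonempty_ncMatching {w : List Color} (hw : Balanced w) :
    Nonempty (NCMatching w) := by
  induction hn : w.length using Nat.strong_induction_on generalizing w with
  | _ n ih =>
    rcases eq_or_ne w [] with rfl | hne
    · exact ⟨.nil⟩
    have hcount := count_red_add_count_blue w
    have hpos := List.length_pos_iff.mpr hne
    have hmem : ∀ c, c ∈ w := by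
      unfold Balanced at hw
      intro c
      cases c <;> exact List.count_pos_iff.mp (by omega)
    obtain ⟨i, hi, hswap⟩ := exists_getElem?_succ_eq_swapColor hmem
    obtain ⟨m⟩ := ih _ (by have := length_eraseAdj hi; omega)
      ((balanced_eraseAdj_iff hi hswap).mpr hw) rfl
    exact ⟨.insertChord hi hswap m⟩

/-! ### Uniqueness for three blocks -/

def IsThreeBlock (w : List Color) : Prop :=
  ∃ c a b d, w = List.replicate a c ++ List.replicate b (swapColor c) ++ List.replicate d c

section ThreeBlock

variable (c : Color) (a b d : ℕ)

theorem getElem?_threeBlock (k : ℕ) :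
    (List.replicate a c ++ List.replicate b (swapColor c) ++ List.replicate d c)[k]? =
      if k < a then some c else if k < a + b then some (swapColor c)
      else if k < a + b + d then some c else none := by
  simp only [List.getElem?_append, List.getElem?_replicate, List.length_append,
    List.length_replicate]
  split_ifs <;> first | rfl | omega

theorem balanced_threeBlock_iff :
    Balanced (List.replicate a c ++ List.replicate b (swapColor c) ++ List.replicate d c) ↔
      a + d = b := by
  simp only [Balanced, List.count_append, List.count_replicate]
  cases c
  · simp [swapColor]
  · simp [swapColor, eq_comm (a := b)]

theorem eraseAdj_threeBlock :
    eraseAdj (List.replicate (a + 1) c ++ List.replicate (b + 1) (swapColor c) ++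
      List.replicate d c) a =
      List.replicate a c ++ List.replicate b (swapColor c) ++ List.replicate d c := by
  apply List.ext_getElem?
  intro k
  rw [getElem?_eraseAdj, getElem?_threeBlock, getElem?_threeBlock, shiftUp]
  split_ifs <;> first | rfl | omega

end ThreeBlock

theorem IsThreeBlock.exists_succ {w : List Color} (hw : IsThreeBlock w) (hne : w ≠ [])
    (hbal : Balanced w) : ∃ c a b d,
      w = List.replicate (a + 1) c ++ List.replicate (b + 1) (swapColor c) ++
        List.replicate d c := by
  obtain ⟨c, a, b, d, rfl⟩ := hw
  have hb := ((balanced_threeBlock_iff c a b d).mp hbal).symm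
  rcases Nat.eq_zero_or_pos a with rfl | ha
  · rcases Nat.eq_zero_or_pos b with rfl | hb'
    · obtain rfl : d = 0 := by omega
      simp at hne
    refine ⟨swapColor c, b - 1, d - 1, 0, ?_⟩
    rw [Nat.sub_add_cancel hb', Nat.sub_add_cancel (by omega)]
    simp
  · exact ⟨c, a - 1, b - 1, d, by rw [Nat.sub_add_cancel ha, Nat.sub_add_cancel (by omega)]⟩

theorem lt_or_le_of_getElem?_threeBlock_eq {c : Color} {a b d k : ℕ}
    (h : (List.replicate a c ++ List.replicate b (swapColor c) ++ List.replicate d c)[k]? =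
      some c) : k < a ∨ a + b ≤ k := by
  rw [getElem?_threeBlock] at h
  split_ifs at h <;> first | omega | simp_all [swapColor_ne]

theorem lt_of_getElem?_threeBlock_eq_swapColor {c : Color} {a b d k : ℕ}
    (h : (List.replicate a c ++ List.replicate b (swapColor c) ++ List.replicate d c)[k]? =
      some (swapColor c)) : a ≤ k ∧ k < a + b := by
  rw [getElem?_threeBlock] at h
  split_ifs at h <;> first | omega | simp_all [(swapColor_ne c).symm]

-- Otherwise the chords at the letters `a` and `a + 1`, on both sides of the first block
-- boundary, would cross.
theorem NCMatching.f_eq_succ_of_threeBlock {c : Color} {a b d : ℕ}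
    (m : NCMatching (List.replicate (a + 1) c ++ List.replicate (b + 1) (swapColor c) ++
      List.replicate d c)) : m.f a = a + 1 := by
  have hfa := lt_of_getElem?_threeBlock_eq_swapColor (d := d) (k := m.f a) (by
    rw [m.getElem?_f, getElem?_threeBlock, if_pos (by omega), Option.map_some])
  have hfa' := lt_or_le_of_getElem?_threeBlock_eq (d := d) (k := m.f (a + 1)) (by
    rw [m.getElem?_f, getElem?_threeBlock, if_neg (by omega), if_pos (by omega), Option.map_some,
      swapColor_swapColor])
  by_contra hne
  have hne' : m.f (a + 1) ≠ a := fun h ↦ hne (by have := m.f_f (a + 1); rwa [h] at this)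
  rcases hfa' with hlt | hge
  · exact m.noncrossing (i := m.f (a + 1)) (j := a) (by omega) (by rw [m.f_f]; omega)
      (by rw [m.f_f]; omega)
  · exact m.noncrossing (show a < a + 1 by omega) (by omega) (by omega)

theorem IsThreeBlock.subsingleton_ncMatching {w : List Color} (hw : IsThreeBlock w) :
    Subsingleton (NCMatching w) := by
  induction hn : w.length using Nat.strong_induction_on generalizing w with
  | _ n ih =>
    constructor
    intro m m'
    rcases eq_or_ne w [] with rfl | hne
    · ext k
      rw [m.f_of_length_le k (Nat.zero_le k), m'.f_of_length_le k (Nat.zero_le k)]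
    obtain ⟨c, a, b, d, rfl⟩ := hw.exists_succ hne m.balanced
    have hm := m.f_eq_succ_of_threeBlock
    have hm' := m'.f_eq_succ_of_threeBlock
    have hlt := m.lt_length_of_f_eq_succ hm
    have hsub : Subsingleton (NCMatching (eraseAdj _ a)) :=
      ih _ (by have := length_eraseAdj hlt; omega) ⟨c, a, b, d, eraseAdj_threeBlock c a b d⟩ rfl
    rw [← m.insertChord_eraseChord hm (m.getElem?_succ_of_f_eq_succ hm),
      ← m'.insertChord_eraseChord hm' (m.getElem?_succ_of_f_eq_succ hm),
      hsub.elim (m.eraseChord hm) (m'.eraseChord hm')]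

/-! ### Non-uniqueness -/

def HasAlternatingQuadruple (w : List Color) : Prop :=
  ∃ (c : Color) (i j k l : ℕ), i < j ∧ j < k ∧ k < l ∧ w[i]? = some c ∧
    w[j]? = some (swapColor c) ∧ w[k]? = some c ∧ w[l]? = some (swapColor c)

theorem isThreeBlock_or_hasAlternatingQuadruple (w : List Color) :
    IsThreeBlock w ∨ HasAlternatingQuadruple w := by
  induction w using List.reverseRecOn with
  | nil => exact .inl ⟨.red, 0, 0, 0, rfl⟩
  | append_singleton w x ih =>
    rcases ih with ⟨c, a, b, d, rfl⟩ | ⟨c, i, j, k, l, hij, hjk, hkl, hi, hj, hk, hl⟩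
    · by_cases hx : x = c
      · subst hx
        exact .inl ⟨x, a, b, d + 1, by simp [List.replicate_succ']⟩
      obtain rfl := eq_swapColor_of_ne (Ne.symm hx)
      rcases Nat.eq_zero_or_pos d with rfl | hd
      · exact .inl ⟨c, a, b + 1, 0, by simp [List.replicate_succ']⟩
      rcases Nat.eq_zero_or_pos a with rfl | ha
      · exact .inl ⟨swapColor c, b, d, 1, by simp⟩
      rcases Nat.eq_zero_or_pos b with rfl | hb
      · exact .inl ⟨c, a + d, 1, 0, by rw [List.replicate_add]; simp⟩
      have hlen : (List.replicate a c ++ List.replicate b (swapColor c) ++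
          List.replicate d c).length = a + b + d := by simp [Nat.add_assoc]
      refine .inr ⟨c, 0, a, a + b, a + b + d, ha, by omega, by omega, ?_, ?_, ?_, ?_⟩
      · rw [List.getElem?_append_left (by omega), getElem?_threeBlock, if_pos ha]
      · rw [List.getElem?_append_left (by omega), getElem?_threeBlock, if_neg (by omega),
          if_pos (by omega)]
      · rw [List.getElem?_append_left (by omega), getElem?_threeBlock, if_neg (by omega),
          if_neg (by omega), if_pos (by omega)]
      · rw [← hlen, List.getElem?_concat_length]
    · have hl' := (List.getElem?_eq_some_iff.mp hl).1
      refine .inr ⟨c, i, j, k, l, hij, hjk, hkl, ?_⟩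
      simp only [List.getElem?_append_left (show i < w.length by omega),
        List.getElem?_append_left (show j < w.length by omega),
        List.getElem?_append_left (show k < w.length by omega), List.getElem?_append_left hl']
      exact ⟨hi, hj, hk, hl⟩

theorem exists_getElem?_eq_and_succ_eq_swapColor {w : List Color} {c : Color} {j k : ℕ}
    (hjk : j < k) (hj : w[j]? = some c) (hk : w[k]? = some (swapColor c)) :
    ∃ p, j ≤ p ∧ p < k ∧ w[p]? = some c ∧ w[p + 1]? = some (swapColor c) := by
  induction k with
  | zero => omega
  | succ k ih =>
    have hlt : k < w.length := by have := (List.getElem?_eq_some_iff.mp hk).1; omega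
    by_cases hkc : w[k] = c
    · exact ⟨k, by omega, by omega, by rw [List.getElem?_eq_getElem hlt, hkc], hk⟩
    · have hk' : w[k]? = some (swapColor c) := by
        rw [List.getElem?_eq_getElem hlt, ← eq_swapColor_of_ne (Ne.symm hkc)]
      have hjk' : j < k := by
        rcases Nat.lt_succ_iff_lt_or_eq.mp hjk with h | rfl
        · exact h
        · rw [List.getElem?_eq_getElem hlt] at hj
          exact absurd (Option.some_inj.mp hj) hkc
      obtain ⟨p, hjp, hpk, hp⟩ := ih hjk' hk'
      exact ⟨p, hjp, by omega, hp⟩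

def HasAlternatingTriple (w : List Color) : Prop :=
  ∃ (c : Color) (p : ℕ), w[p]? = some c ∧ w[p + 1]? = some (swapColor c) ∧ w[p + 2]? = some c

theorem HasAlternatingTriple.nontrivial_ncMatching {w : List Color} (h : HasAlternatingTriple w)
    (hw : Balanced w) : Nontrivial (NCMatching w) := by
  obtain ⟨c, p, h₀, h₁, h₂⟩ := h
  have hlt : p + 2 < w.length := (List.getElem?_eq_some_iff.mp h₂).1
  have hne₀ : w[p + 1]? = w[p]?.map swapColor := by rw [h₀, h₁, Option.map_some]
  have hne₁ : w[p + 1 + 1]? = w[p + 1]?.map swapColor := by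
    rw [h₁, Option.map_some, swapColor_swapColor]
    exact h₂
  obtain ⟨m₀⟩ := ((balanced_eraseAdj_iff (by omega) hne₀).mpr hw).nonempty_ncMatching
  obtain ⟨m₁⟩ := ((balanced_eraseAdj_iff hlt hne₁).mpr hw).nonempty_ncMatching
  refine ⟨.insertChord (by omega) hne₀ m₀, .insertChord hlt hne₁ m₁, fun h ↦ ?_⟩
  have := congrArg (fun m : NCMatching w ↦ m.f (p + 1)) h
  simp only [NCMatching.insertChord_f_right, NCMatching.insertChord_f_left] at this
  omega

theorem getElem?_eq_swapColor_of_ne {w : List Color} {k : ℕ} {c : Color} (hk : k < w.length)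
    (h : w[k]? ≠ some c) : w[k]? = some (swapColor c) := by
  rw [List.getElem?_eq_getElem hk] at h ⊢
  exact congrArg some (eq_swapColor_of_ne fun e ↦ h (congrArg some e.symm))

-- Take the first change of letter `c' c` between the two middle letters of the quadruple.
-- Without alternating triples it sits inside `c' c' c c`, and erasing it keeps a quadruple.
theorem HasAlternatingQuadruple.exists_eraseAdj {w : List Color} (hq : HasAlternatingQuadruple w)
    (ht : ¬ HasAlternatingTriple w) : ∃ p, p + 1 < w.length ∧
      w[p + 1]? = w[p]?.map swapColor ∧ HasAlternatingQuadruple (eraseAdj w p) := by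
  obtain ⟨c, i, j, k, l, hij, hjk, hkl, hi, hj, hk, hl⟩ := hq
  have hl' := (List.getElem?_eq_some_iff.mp hl).1
  obtain ⟨p, hjp, hpk, hp, hp₁⟩ := exists_getElem?_eq_and_succ_eq_swapColor hjk hj
    (by rwa [swapColor_swapColor])
  rw [swapColor_swapColor] at hp₁
  have hprev : w[p - 1]? = some (swapColor c) := getElem?_eq_swapColor_of_ne (by omega)
    fun h ↦ ht ⟨c, p - 1, h, by rwa [Nat.sub_add_cancel (by omega)],
      by rwa [show p - 1 + 2 = p + 1 by omega]⟩
  have hnext : w[p + 2]? = some c := by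
    simpa using getElem?_eq_swapColor_of_ne (c := swapColor c) (by omega)
      fun h ↦ ht ⟨swapColor c, p, hp, by rwa [swapColor_swapColor], h⟩
  have hip : i ≠ p - 1 := by
    rintro rfl
    rw [hi, Option.some_inj] at hprev
    exact swapColor_ne c hprev.symm
  have hpl : p + 2 ≠ l := by
    rintro rfl
    rw [hnext, Option.some_inj] at hl
    exact swapColor_ne c hl.symm
  refine ⟨p, by omega, by rw [hp, hp₁, Option.map_some, swapColor_swapColor],
    c, i, p - 1, p, l - 2, by omega, by omega, by omega, ?_⟩
  simp only [getElem?_eraseAdj, shiftUp, if_pos (show i < p by omega),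
    if_pos (show p - 1 < p by omega), lt_irrefl, if_false, if_neg (show ¬ l - 2 < p by omega),
    Nat.sub_add_cancel (show 2 ≤ l by omega)]
  exact ⟨hi, hprev, hnext, hl⟩

theorem HasAlternatingQuadruple.nontrivial_ncMatching {w : List Color}
    (hw : HasAlternatingQuadruple w) (hbal : Balanced w) : Nontrivial (NCMatching w) := by
  induction hn : w.length using Nat.strong_induction_on generalizing w with
  | _ n ih =>
    by_cases ht : HasAlternatingTriple w
    · exact ht.nontrivial_ncMatching hbal
    obtain ⟨p, hp, hsw, hq⟩ := hw.exists_eraseAdj ht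
    obtain ⟨m₁, m₂, hne⟩ := (ih _ (by have := length_eraseAdj hp; omega) hq
      ((balanced_eraseAdj_iff hp hsw).mpr hbal) rfl).exists_pair_ne
    exact ⟨.insertChord hp hsw m₁, .insertChord hp hsw m₂,
      (NCMatching.insertChord_injective hp hsw).ne hne⟩

theorem nonempty_unique_ncMatching_iff {w : List Color} :
    Nonempty (Unique (NCMatching w)) ↔ Balanced w ∧ IsThreeBlock w := by
  rw [unique_iff_subsingleton_and_nonempty]
  constructor
  · rintro ⟨hsub, ⟨m⟩⟩
    refine ⟨m.balanced, (isThreeBlock_or_hasAlternatingQuadruple w).resolve_right fun h ↦ ?_⟩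
    exact not_nontrivial_iff_subsingleton.mpr hsub (h.nontrivial_ncMatching m.balanced)
  · rintro ⟨hbal, hw⟩
    exact ⟨hw.subsingleton_ncMatching, hbal.nonempty_ncMatching⟩

/-! ### From two rows to one word -/

-- The top row from left to right, then the bottom row from right to left: this walks around
-- the boundary of the strip, so arcs in the strip become non-crossing chords over a line.
def word (t b : List Color) : List Color := t ++ (b.map swapColor).reverse

section Word

variable {t b : List Color}

@[simp]
theorem length_word : (word t b).length = t.length + b.length := by
  simp [word]

abbrev Bead (t b : List Color) : Type := Fin t.length ⊕ Fin b.length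

def position (t b : List Color) : Bead t b ≃ Fin (t.length + b.length) :=
  (Equiv.sumCongr (Equiv.refl _) Fin.revPerm).trans finSumFinEquiv

@[simp]
theorem position_inl (i : Fin t.length) : (position t b (.inl i) : ℕ) = i := rfl

@[simp]
theorem position_inr (j : Fin b.length) :
    (position t b (.inr j) : ℕ) = t.length + (b.length - (j + 1)) := by
  simp [position, Fin.val_rev]

theorem exists_position_eq {k : ℕ} (hk : k < t.length + b.length) :
    ∃ x, (position t b x : ℕ) = k :=
  ⟨(position t b).symm ⟨k, hk⟩, by simp⟩

def letter (t b : List Color) : Bead t b → Color :=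
  Sum.elim t.get (swapColor ∘ b.get)

theorem getElem?_word_position (x : Bead t b) :
    (word t b)[(position t b x : ℕ)]? = some (letter t b x) := by
  rcases x with i | j
  · simp [word, letter, List.getElem?_append_left]
  · simp only [position_inr, word, letter]
    rw [List.getElem?_append_right (by simp),
      List.getElem?_reverse (by simpa using j.pos)]
    simp only [List.length_map, List.getElem?_map, Nat.add_sub_cancel_left]
    rw [show b.length - 1 - (b.length - (j + 1)) = j by omega, List.getElem?_eq_getElem j.isLt]
    rfl

theorem _root_.TRMatching.letter_pair (m : TRMatching t b) (x : Bead t b) :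
    letter t b (m.pair x) = swapColor (letter t b x) := by
  rcases x with i | j <;> rcases h : m.pair _ with i' | j'
  · exact eq_swapColor_of_ne (m.topColor i i' h)
  · simp only [letter, Sum.elim_inl, Sum.elim_inr, Function.comp_apply, m.crossColor i j' h]
  · have h' : m.pair (.inl i') = .inr j := by rw [← h, m.invol]
    simp only [letter, Sum.elim_inl, Sum.elim_inr, Function.comp_apply, m.crossColor i' j h',
      swapColor_swapColor]
  · simpa [letter] using congrArg swapColor (eq_swapColor_of_ne (m.botColor j j' h))

theorem _root_.TRMatching.pair_injective :
    Function.Injective (TRMatching.pair (t := t) (b := b)) := by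
  rintro ⟨⟩ ⟨⟩ h
  cases h
  rfl

def LinearNonCrossing (p : Bead t b → Bead t b) : Prop :=
  ∀ x y, position t b x < position t b y → position t b y < position t b (p x) →
    ¬ position t b (p x) < position t b (p y)

-- Each of the five crossing patterns of `TRNonCrossing` is one interleaving of positions.
theorem _root_.TRNonCrossing.linearNonCrossing {m : TRMatching t b} (hm : TRNonCrossing m) :
    LinearNonCrossing m.pair := by
  obtain ⟨h₁, h₂, h₃, h₄, h₅⟩ := hm
  intro x y
  simp only [Fin.lt_def]
  rcases x with i | j <;> rcases y with i' | j' <;>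
    rcases hx : m.pair _ with k | k <;> rcases hy : m.pair _ with l | l <;>
    simp only [position_inl, position_inr] <;> intro hxy hyx hxy' <;>
    first
    | omega
    | exact h₁ i i' k l hx hy ⟨hxy, hyx, hxy'⟩
    | exact h₃ i k i' l hx hy ⟨hxy, hyx⟩
    | exact h₅ i i' k l hx hy hxy (by omega)
    | exact h₄ l j' i k (by rw [← hy, m.invol]) hx ⟨by omega, by omega⟩
    | exact h₂ l k j' j (by rw [← hy, m.invol]) (by rw [← hx, m.invol])
        ⟨by omega, by omega, by omega⟩

theorem trNonCrossing_of_linearNonCrossing {m : TRMatching t b}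
    (h : LinearNonCrossing m.pair) : TRNonCrossing m := by
  simp only [LinearNonCrossing, Fin.lt_def] at h
  refine ⟨fun i j k l hk hl ⟨hij, hjk, hkl⟩ ↦ ?_, fun i j k l hk hl ⟨hij, hjk, hkl⟩ ↦ ?_,
    fun a c i j hc hj ⟨hai, hic⟩ ↦ ?_, fun a c i j hc hj ⟨haj, hjc⟩ ↦ ?_,
    fun i i' j j' hj hj' hii' hjj' ↦ ?_⟩
  · have := h (.inl i) (.inl j)
    simp only [hk, hl, position_inl] at this
    exact this hij hjk hkl
  · have hk' : m.pair (.inr k) = .inr i := by rw [← hk, m.invol]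
    have hl' : m.pair (.inr l) = .inr j := by rw [← hl, m.invol]
    have := h (.inr l) (.inr k)
    rw [hl', hk'] at this
    simp only [position_inr] at this
    exact this (by omega) (by omega) (by omega)
  · have := h (.inl a) (.inl i)
    simp only [hc, hj, position_inl, position_inr] at this
    exact this hai hic (by omega)
  · have hc' : m.pair (.inr c) = .inr a := by rw [← hc, m.invol]
    have := h (.inl i) (.inr c)
    rw [hj, hc'] at this
    simp only [position_inl, position_inr] at this
    exact this (by omega) (by omega) (by omega)
  · have := h (.inl i) (.inl i')
    simp only [hj, hj', position_inl, position_inr] at this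
    exact this hii' (by omega) (by omega)

def linearize (p : Bead t b → Bead t b) (k : ℕ) : ℕ :=
  if hk : k < t.length + b.length then position t b (p ((position t b).symm ⟨k, hk⟩)) else k

@[simp]
theorem linearize_position (p : Bead t b → Bead t b) (x : Bead t b) :
    linearize p (position t b x) = position t b (p x) := by
  simp [linearize]

theorem linearize_of_le (p : Bead t b → Bead t b) {k : ℕ} (hk : t.length + b.length ≤ k) :
    linearize p k = k :=
  dif_neg (by omega)

def _root_.TRMatching.toNCMatching (m : TRMatching t b) (hm : TRNonCrossing m) :
    NCMatching (word t b) where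
  f := linearize m.pair
  f_f k := by
    by_cases hk : k < t.length + b.length
    · obtain ⟨x, rfl⟩ := exists_position_eq hk
      simp [m.invol]
    · rw [linearize_of_le (k := k) _ (by omega), linearize_of_le (k := k) _ (by omega)]
  f_of_length_le k hk := linearize_of_le _ (by simpa using hk)
  getElem?_f k := by
    by_cases hk : k < t.length + b.length
    · obtain ⟨x, rfl⟩ := exists_position_eq hk
      rw [linearize_position, getElem?_word_position, getElem?_word_position, m.letter_pair]
      rfl
    · rw [linearize_of_le _ (by omega), List.getElem?_eq_none (by simp; omega)]
      rfl
  noncrossing i j hij hj hji := by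
    have hi : i < t.length + b.length := by
      by_contra h
      rw [linearize_of_le _ (by omega)] at hj
      omega
    obtain ⟨x, rfl⟩ := exists_position_eq hi
    rw [linearize_position] at hj hji
    obtain ⟨y, rfl⟩ := exists_position_eq (show j < t.length + b.length by omega)
    rw [linearize_position] at hji
    exact hm.linearNonCrossing x y hij hj hji

namespace NCMatching

variable (g : NCMatching (word t b))

theorem f_position_lt (x : Bead t b) : g.f (position t b x) < t.length + b.length := by
  simpa using g.f_lt_length (k := position t b x) (by simp)

def beadPair (x : Bead t b) : Bead t b :=
  (position t b).symm ⟨g.f (position t b x), g.f_position_lt x⟩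

@[simp]
theorem position_beadPair (x : Bead t b) :
    (position t b (g.beadPair x) : ℕ) = g.f (position t b x) := by
  simp [beadPair]

theorem letter_beadPair (x : Bead t b) :
    letter t b (g.beadPair x) = swapColor (letter t b x) := by
  have := g.getElem?_f (position t b x)
  rw [← position_beadPair, getElem?_word_position, getElem?_word_position] at this
  exact Option.some_inj.mp this

def toTRMatching : TRMatching t b where
  pair := g.beadPair
  invol x := by
    apply (position t b).injective
    ext
    simp [g.f_f]
  ne x h := g.f_ne (k := position t b x) (by simp) (by rw [← position_beadPair, h])
  topColor i j h e := by
    have := g.letter_beadPair (.inl i)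
    rw [h] at this
    simp only [letter, Sum.elim_inl, ← e] at this
    exact swapColor_ne _ this.symm
  botColor i j h e := by
    have := g.letter_beadPair (.inr i)
    rw [h] at this
    simp only [letter, Sum.elim_inr, Function.comp_apply, swapColor_swapColor, ← e] at this
    exact swapColor_ne _ this
  crossColor i j h := by
    have := g.letter_beadPair (.inl i)
    rw [h] at this
    exact (swapColor_involutive.injective this).symm

theorem toTRMatching_noncrossing : TRNonCrossing g.toTRMatching := by
  refine trNonCrossing_of_linearNonCrossing fun x y hxy hy hxy' ↦ ?_
  simp only [Fin.lt_def, toTRMatching, position_beadPair] at hy hxy'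
  exact g.noncrossing hxy hy hxy'

end NCMatching

def ncMatchingEquiv :
    {m : TRMatching t b // TRNonCrossing m} ≃ NCMatching (word t b) where
  toFun m := m.1.toNCMatching m.2
  invFun g := ⟨g.toTRMatching, g.toTRMatching_noncrossing⟩
  left_inv m := by
    apply Subtype.ext
    apply TRMatching.pair_injective
    funext x
    apply (position t b).injective
    ext
    simp [NCMatching.toTRMatching, TRMatching.toNCMatching]
  right_inv g := by
    ext k
    by_cases hk : k < t.length + b.length
    · obtain ⟨x, rfl⟩ := exists_position_eq hk
      simp [NCMatching.toTRMatching, TRMatching.toNCMatching]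
    · have hk' : (word t b).length ≤ k := by simp; omega
      rw [g.f_of_length_le k hk']
      exact linearize_of_le _ (by omega)

theorem existsUnique_trNonCrossing_iff :
    (∃! m : TRMatching t b, TRNonCrossing m) ↔ Nonempty (Unique (NCMatching (word t b))) := by
  rw [← unique_subtype_iff_existsUnique]
  exact ⟨fun ⟨_⟩ ↦ ⟨ncMatchingEquiv.symm.unique⟩, fun ⟨_⟩ ↦ ⟨ncMatchingEquiv.unique⟩⟩

theorem balanced_word_iff :
    Balanced (word t b) ↔
      (t.count .red : ℤ) - t.count .blue = (b.count .red : ℤ) - b.count .blue := by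
  simp only [Balanced, word, List.count_append, List.count_reverse, count_map_swapColor, swapColor]
  omega

end Word

/-! ### The three-block words -/

section Symmetry

variable {t b : List Color}

theorem word_map_swapColor :
    word (t.map swapColor) (b.map swapColor) = (word t b).map swapColor := by
  simp [word, List.map_reverse]

theorem word_comm : word b t = ((word t b).reverse).map swapColor := by
  simp [word, List.map_reverse, Function.comp_def]

theorem IsThreeBlock.map_swapColor {w : List Color} (h : IsThreeBlock w) :
    IsThreeBlock (w.map swapColor) := by
  obtain ⟨c, a, b, d, rfl⟩ := h
  exact ⟨swapColor c, a, b, d, by simp⟩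

theorem IsThreeBlock.reverse {w : List Color} (h : IsThreeBlock w) : IsThreeBlock w.reverse := by
  obtain ⟨c, a, b, d, rfl⟩ := h
  exact ⟨c, d, b, a, by simp [List.append_assoc]⟩

theorem isThreeBlock_word_comm : IsThreeBlock (word b t) ↔ IsThreeBlock (word t b) :=
  have key {t b : List Color} (h : IsThreeBlock (word t b)) : IsThreeBlock (word b t) :=
    word_comm ▸ h.reverse.map_swapColor
  ⟨key, key⟩

theorem isThreeBlock_word_map_swapColor :
    IsThreeBlock (word (t.map swapColor) (b.map swapColor)) ↔ IsThreeBlock (word t b) := by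
  refine ⟨fun h ↦ ?_, fun h ↦ word_map_swapColor ▸ h.map_swapColor⟩
  simpa [word_map_swapColor, List.map_map, swapColor_involutive.comp_self] using h.map_swapColor

def GoodUpToSymmetry (t b : List Color) : Prop :=
  GoodPair t b ∨ GoodPair b t ∨ GoodPair (t.map swapColor) (b.map swapColor) ∨
    GoodPair (b.map swapColor) (t.map swapColor)

theorem goodUpToSymmetry_map_swapColor_iff :
    GoodUpToSymmetry (t.map swapColor) (b.map swapColor) ↔ GoodUpToSymmetry t b := by
  simp only [GoodUpToSymmetry, List.map_map, swapColor_involutive.comp_self, List.map_id]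
  tauto

theorem isThreeBlock_word_of_goodPair (h : GoodPair t b) : IsThreeBlock (word t b) := by
  rcases h with ⟨p, q, r, s, rfl, rfl⟩ | ⟨p, q, r, s, rfl, rfl⟩
  · exact ⟨.red, p, q + s, r, by
      simp [word, swapColor, List.append_assoc, List.replicate_add,
        -List.replicate_append_replicate]⟩
  · exact ⟨.red, p, q, r + s, by simp [word, swapColor, List.append_assoc]⟩

theorem GoodUpToSymmetry.isThreeBlock_word (h : GoodUpToSymmetry t b) :
    IsThreeBlock (word t b) := by
  rcases h with h | h | h | h
  · exact isThreeBlock_word_of_goodPair h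
  · exact isThreeBlock_word_comm.mp (isThreeBlock_word_of_goodPair h)
  · exact isThreeBlock_word_map_swapColor.mp (isThreeBlock_word_of_goodPair h)
  · exact isThreeBlock_word_map_swapColor.mp
      (isThreeBlock_word_comm.mp (isThreeBlock_word_of_goodPair h))

theorem eq_map_swapColor_reverse {l : List Color} (h : (b.map swapColor).reverse = l) :
    b = l.reverse.map swapColor := by
  simp [← h, swapColor_involutive.comp_self]

theorem goodUpToSymmetry_of_word_eq {a q d : ℕ}
    (h : word t b = List.replicate a .red ++ List.replicate q .blue ++ List.replicate d .red) :
    GoodUpToSymmetry t b := by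
  rw [word, List.append_assoc, List.append_eq_append_iff] at h
  rcases h with ⟨u, hR, hv⟩ | ⟨u, rfl, hu⟩
  · obtain ⟨-, ht, hu⟩ := List.replicate_eq_append_iff.mp hR
    refine .inr <| .inr <| .inr <| .inr ⟨d, q, u.length, t.length, ?_, ?_⟩
    · rw [eq_map_swapColor_reverse hv, hu]
      simp [swapColor, List.append_assoc]
    · rw [ht]
      simp [swapColor]
  rcases List.append_eq_append_iff.mp hu with ⟨u', rfl, hv⟩ | ⟨u', hB, hv⟩
  · obtain ⟨-, hu', hv'⟩ := List.replicate_eq_append_iff.mp hv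
    refine .inl <| .inr ⟨a, q, u'.length, b.length, by rw [hu']; simp [List.append_assoc], ?_⟩
    rw [eq_map_swapColor_reverse hv']
    simp [swapColor]
  · obtain ⟨-, hu', hu''⟩ := List.replicate_eq_append_iff.mp hB
    refine .inl <| .inl ⟨a, u.length, d, u'.length, congrArg _ hu', ?_⟩
    rw [eq_map_swapColor_reverse hv, hu'']
    simp [swapColor]

theorem IsThreeBlock.goodUpToSymmetry (h : IsThreeBlock (word t b)) : GoodUpToSymmetry t b := by
  obtain ⟨c, a, q, d, hw⟩ := h
  cases c
  · exact goodUpToSymmetry_of_word_eq hw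
  · rw [← goodUpToSymmetry_map_swapColor_iff]
    exact goodUpToSymmetry_of_word_eq (a := a) (q := q) (d := d)
      (by rw [word_map_swapColor, hw]; simp [swapColor])

theorem isThreeBlock_word_iff : IsThreeBlock (word t b) ↔ GoodUpToSymmetry t b :=
  ⟨IsThreeBlock.goodUpToSymmetry, GoodUpToSymmetry.isThreeBlock_word⟩

end Symmetry

end Beads

/-- Two-row bead configurations with a unique non-crossing matching are exactly those
of the forms (i) or (ii), up to swapping rows and up to swapping colors, subject to the
balance condition that (#red − #blue) agrees in the two rows. -/
theorem stmt11 (t b : List Color) :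
    (∃! m : TRMatching t b, TRNonCrossing m) ↔
      ((t.count Color.red : ℤ) - t.count Color.blue
          = (b.count Color.red : ℤ) - b.count Color.blue) ∧
        (GoodPair t b ∨ GoodPair b t ∨
          GoodPair (t.map swapColor) (b.map swapColor) ∨
          GoodPair (b.map swapColor) (t.map swapColor)) := by
  rw [Beads.existsUnique_trNonCrossing_iff, Beads.nonempty_unique_ncMatching_iff,
    Beads.balanced_word_iff, Beads.isThreeBlock_word_iff]
  rfl
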